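/- Let Θ ⊆ S¹ be closed with positive one-dimensional Lebesgue (arc-length) measure. Then for every δ > 0 there exists a Borel probability measure μ supported on Θ such that |μ̂(ξ)| ≤ δ for all ξ outside some ball, i.e., limsup_{|ξ|→∞} |μ̂(ξ)| ≤ δ. -/

import Mathlib

open Complex Set Filter MeasureTheory
open scoped ENNReal Real
noncomputable section

/-- The Fourier transform `μ̂(ξ) = ∫ e^{-2πi⟨ξ,x⟩} dμ(x)` of a measure on `ℂ ≅ ℝ²`. -/
def ftMeasure (μ : Measure ℂ) (ξ : ℂ) : ℂ :=
  ∫ x, Complex.exp (-(2 * Real.pi * (ξ.re * x.re + ξ.im * x.im)) * Complex.I) ∂μ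

/-- Arc-length measure on the unit circle `S¹ ⊆ ℂ`, as the pushforward of Lebesgue
measure on `[0, 2π)` under `t ↦ e^{it}`. -/
def arcLength : Measure ℂ :=
  Measure.map (fun t : ℝ => Complex.exp (t * Complex.I))
    (volume.restrict (Set.Ico 0 (2 * Real.pi)))

/-- chord lemma -/
lemma chord_unique {a b a' b' : ℂ} (ha : Complex.normSq a = 1) (hb : Complex.normSq b = 1)
    (ha' : Complex.normSq a' = 1) (hb' : Complex.normSq b' = 1)
    (hv : a - b = a' - b') (h1 : 0 < (a * (starRingEnd ℂ) b).im)
    (h2 : 0 < (a' * (starRingEnd ℂ) b').im) : a = a' ∧ b = b' := by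
  set v := a - b with hvdef
  have hvne : v ≠ 0 := by
    intro h
    have hab : a = b := by rwa [hvdef, sub_eq_zero] at h
    rw [hab, Complex.mul_conj] at h1
    simp at h1
  have hkey : a * (starRingEnd ℂ) v = a' * (starRingEnd ℂ) v := by
    set p := a * (starRingEnd ℂ) v with hp
    set q := a' * (starRingEnd ℂ) v with hq
    have hpre : 2 * p.re = Complex.normSq v := by
      have : Complex.normSq (a - v) = 1 := by rw [hvdef]; simpa using hb
      have expand : Complex.normSq (a - v) = Complex.normSq a - 2 * p.re + Complex.normSq v := by
        simp [Complex.normSq_apply, hp, Complex.mul_re, Complex.sub_re, Complex.sub_im]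
        ring
      rw [expand, ha] at this; linarith
    have hqre : 2 * q.re = Complex.normSq v := by
      have hv2 : a - b = a' - b' := hv
      have hv' : a' - v = b' := by rw [hvdef]; linear_combination -hv2
      have : Complex.normSq (a' - v) = 1 := by rw [hv']; exact hb'
      have expand : Complex.normSq (a' - v) = Complex.normSq a' - 2 * q.re + Complex.normSq v := by
        simp [Complex.normSq_apply, hq, Complex.mul_re, Complex.sub_re, Complex.sub_im]
        ring
      rw [expand, ha'] at this; linarith
    have hpim : p.im < 0 := by
      have : p = 1 - a * (starRingEnd ℂ) b := by
        rw [hp, hvdef]; rw [map_sub, mul_sub]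
        rw [Complex.mul_conj, ha]; push_cast; ring
      rw [this]; simpa using h1
    have hqim : q.im < 0 := by
      have : q = 1 - a' * (starRingEnd ℂ) b' := by
        rw [hq, hv]; rw [map_sub, mul_sub]
        rw [Complex.mul_conj, ha']; push_cast; ring
      rw [this]; simpa using h2
    have hnsp : Complex.normSq p = Complex.normSq v := by
      rw [hp, Complex.normSq_mul, Complex.normSq_conj, ha, one_mul]
    have hnsq : Complex.normSq q = Complex.normSq v := by
      rw [hq, Complex.normSq_mul, Complex.normSq_conj, ha', one_mul]
    have him : p.im = q.im := by
      have h1' : p.re = q.re := by linarith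
      have h2' : p.im ^ 2 = q.im ^ 2 := by
        have h3 := hnsp.trans hnsq.symm
        simp only [Complex.normSq_apply] at h3
        rw [← h1'] at h3
        linear_combination h3
      have h4 : (p.im - q.im) * (p.im + q.im) = 0 := by linear_combination h2'
      rcases mul_eq_zero.1 h4 with h5 | h5
      · linarith
      · linarith
    have hre : p.re = q.re := by linarith
    exact Complex.ext hre him
  have hane : (starRingEnd ℂ) v ≠ 0 := by simpa using hvne
  have haa : a = a' := mul_right_cancel₀ hane hkey
  have hv2 : a - b = a' - b' := hv
  refine ⟨haa, ?_⟩
  linear_combination haa - hv2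

def Psi (z : ℂ) : ℂ := Complex.exp (z.re * Complex.I) - Complex.exp (z.im * Complex.I)

def Dmap (z : ℂ) : ℂ →L[ℝ] ℂ :=
  (Complex.reCLM.smulRight (Complex.I * Complex.exp (z.re * Complex.I))) -
  (Complex.imCLM.smulRight (Complex.I * Complex.exp (z.im * Complex.I)))

lemma continuous_Psi : Continuous Psi := by
  unfold Psi; fun_prop

lemma hasFDerivAt_Psi (z : ℂ) : HasFDerivAt Psi (Dmap z) z := by
  have h1 : HasFDerivAt (fun w : ℂ => Complex.exp ((w.re : ℂ) * Complex.I))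
      (Complex.reCLM.smulRight (Complex.I * Complex.exp (z.re * Complex.I))) z := by
    have hL : HasFDerivAt (fun w : ℂ => (w.re : ℂ) * Complex.I)
        (Complex.reCLM.smulRight Complex.I) z := by
      have : (fun w : ℂ => (w.re : ℂ) * Complex.I) = fun w => (Complex.reCLM.smulRight Complex.I) w := by
        ext w; simp [Complex.real_smul]
      rw [this]
      exact (Complex.reCLM.smulRight Complex.I).hasFDerivAt
    have hexp : HasDerivAt Complex.exp (Complex.exp ((z.re : ℂ) * Complex.I)) ((z.re : ℂ) * Complex.I) :=
      Complex.hasDerivAt_exp _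
    have := (hexp.comp_hasFDerivAt z hL)
    refine this.congr_fderiv ?_
    ext w
    simp [Complex.real_smul]
    ring
  have h2 : HasFDerivAt (fun w : ℂ => Complex.exp ((w.im : ℂ) * Complex.I))
      (Complex.imCLM.smulRight (Complex.I * Complex.exp (z.im * Complex.I))) z := by
    have hL : HasFDerivAt (fun w : ℂ => (w.im : ℂ) * Complex.I)
        (Complex.imCLM.smulRight Complex.I) z := by
      have : (fun w : ℂ => (w.im : ℂ) * Complex.I) = fun w => (Complex.imCLM.smulRight Complex.I) w := by
        ext w; simp [Complex.real_smul]
      rw [this]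
      exact (Complex.imCLM.smulRight Complex.I).hasFDerivAt
    have hexp : HasDerivAt Complex.exp (Complex.exp ((z.im : ℂ) * Complex.I)) ((z.im : ℂ) * Complex.I) :=
      Complex.hasDerivAt_exp _
    have := (hexp.comp_hasFDerivAt z hL)
    refine this.congr_fderiv ?_
    ext w
    simp [Complex.real_smul]
    ring
  exact h1.sub h2

lemma det_Dmap (z : ℂ) : (Dmap z).det = Real.sin (z.re - z.im) := by
  have : (Dmap z).det = LinearMap.det ((Dmap z) : ℂ →ₗ[ℝ] ℂ) := rfl
  rw [this, ← LinearMap.det_toMatrix Complex.basisOneI]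
  rw [Matrix.det_fin_two]
  simp [LinearMap.toMatrix_apply, Dmap, Complex.real_smul,
    Complex.exp_ofReal_mul_I_re, Complex.exp_ofReal_mul_I_im, Real.sin_sub]
  ring

-- dup removed

def Box : Set ℂ := {z | z.re ∈ Set.Ico 0 (2 * Real.pi) ∧ z.im ∈ Set.Ico 0 (2 * Real.pi)}

lemma exp_inj_Ico {x y : ℝ} (hx : x ∈ Set.Ico 0 (2 * Real.pi)) (hy : y ∈ Set.Ico 0 (2 * Real.pi))
    (h : Complex.exp (x * Complex.I) = Complex.exp (y * Complex.I)) : x = y := by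
  rw [Complex.exp_eq_exp_iff_exists_int] at h
  obtain ⟨n, hn⟩ := h
  have him : x = y + n * (2 * Real.pi) := by
    have := congrArg Complex.im hn
    simpa using this
  have hπ : 0 < Real.pi := Real.pi_pos
  have hn0 : n = 0 := by
    rcases hx with ⟨hx0, hx2⟩; rcases hy with ⟨hy0, hy2⟩
    by_contra hne
    rcases lt_or_gt_of_ne hne with h1 | h1
    · have : (n : ℝ) ≤ -1 := by exact_mod_cast (show n ≤ -1 by omega)
      nlinarith
    · have : (1 : ℝ) ≤ n := by exact_mod_cast h1
      nlinarith
  rw [hn0] at him; simpa using him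

lemma normSq_exp_mul_I (x : ℝ) : Complex.normSq (Complex.exp (x * Complex.I)) = 1 := by
  have := Complex.norm_exp_ofReal_mul_I x
  rw [← Complex.sq_norm, this]; norm_num

lemma mul_conj_exp (x y : ℝ) :
    Complex.exp (x * Complex.I) * (starRingEnd ℂ) (Complex.exp (y * Complex.I)) =
      Complex.exp (((x - y : ℝ) : ℂ) * Complex.I) := by
  rw [← Complex.exp_conj]
  rw [← Complex.exp_add]
  congr 1
  rw [map_mul, Complex.conj_I, Complex.conj_ofReal]
  push_cast
  ring

lemma im_mul_conj_exp (x y : ℝ) :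
    (Complex.exp (x * Complex.I) * (starRingEnd ℂ) (Complex.exp (y * Complex.I))).im =
      Real.sin (x - y) := by
  rw [mul_conj_exp, Complex.exp_ofReal_mul_I_im]

lemma injOn_Psi_pos : Set.InjOn Psi ({z : ℂ | 0 < Real.sin (z.re - z.im)} ∩ Box) := by
  rintro z ⟨hz1, hz2, hz3⟩ w ⟨hw1, hw2, hw3⟩ h
  have key := chord_unique (normSq_exp_mul_I z.re) (normSq_exp_mul_I z.im)
    (normSq_exp_mul_I w.re) (normSq_exp_mul_I w.im) h
    (by rw [im_mul_conj_exp]; exact hz1) (by rw [im_mul_conj_exp]; exact hw1)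
  exact Complex.ext (exp_inj_Ico hz2 hw2 key.1) (exp_inj_Ico hz3 hw3 key.2)

lemma injOn_Psi_neg : Set.InjOn Psi ({z : ℂ | Real.sin (z.re - z.im) < 0} ∩ Box) := by
  rintro z ⟨hz1, hz2, hz3⟩ w ⟨hw1, hw2, hw3⟩ h
  have h' : Complex.exp (z.im * Complex.I) - Complex.exp (z.re * Complex.I) =
      Complex.exp (w.im * Complex.I) - Complex.exp (w.re * Complex.I) := by
    have : Psi z = Psi w := h
    unfold Psi at this; linear_combination -this
  simp only [Set.mem_setOf_eq] at hz1 hw1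
  have him : 0 < Real.sin (z.im - z.re) := by
    rw [show z.im - z.re = -(z.re - z.im) by ring, Real.sin_neg]; linarith
  have him' : 0 < Real.sin (w.im - w.re) := by
    rw [show w.im - w.re = -(w.re - w.im) by ring, Real.sin_neg]; linarith
  have key := chord_unique (normSq_exp_mul_I z.im) (normSq_exp_mul_I z.re)
    (normSq_exp_mul_I w.im) (normSq_exp_mul_I w.re) h'
    (by rw [im_mul_conj_exp]; exact him) (by rw [im_mul_conj_exp]; exact him')
  exact Complex.ext (exp_inj_Ico hz2 hw2 key.2) (exp_inj_Ico hz3 hw3 key.1)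

lemma null_preimage_Psi {A : Set ℂ} (hA : MeasurableSet A) (hA0 : volume A = 0)
    {s : Set ℂ} (hs : MeasurableSet s) (hsub : ∀ z ∈ s, Real.sin (z.re - z.im) ≠ 0)
    (hinj : Set.InjOn Psi s) : volume (s ∩ Psi ⁻¹' A) = 0 := by
  have key := lintegral_image_eq_lintegral_abs_det_fderiv_mul volume hs
    (fun x _ => (hasFDerivAt_Psi x).hasFDerivWithinAt) hinj (A.indicator 1)
  have hL : ∫⁻ x in Psi '' s, A.indicator 1 x ∂volume = 0 := by
    refine le_antisymm ?_ zero_le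
    calc ∫⁻ x in Psi '' s, A.indicator 1 x ∂volume ≤ ∫⁻ x, A.indicator 1 x ∂volume :=
          setLIntegral_le_lintegral _ _
      _ = volume A := lintegral_indicator_one hA
      _ = 0 := hA0
  rw [hL] at key
  have hfun : ∀ z : ℂ, ENNReal.ofReal |(Dmap z).det| * A.indicator 1 (Psi z) =
      ENNReal.ofReal |Real.sin (z.re - z.im)| * (Psi ⁻¹' A).indicator 1 z := by
    intro z
    rw [det_Dmap]
    by_cases hz : Psi z ∈ A <;> simp [Set.indicator_apply, hz]
  simp_rw [hfun] at key
  have hmeas : Measurable fun z : ℂ =>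
      ENNReal.ofReal |Real.sin (z.re - z.im)| * (Psi ⁻¹' A).indicator 1 z := by
    apply Measurable.mul
    · exact Measurable.ennreal_ofReal ((_root_.continuous_abs.comp
        (Real.continuous_sin.comp (Complex.continuous_re.sub Complex.continuous_im))).measurable)
    · exact Measurable.indicator measurable_const (continuous_Psi.measurable hA)
  have hae : ∀ᵐ z ∂(volume.restrict s),
      ENNReal.ofReal |Real.sin (z.re - z.im)| * (Psi ⁻¹' A).indicator 1 z = 0 := by
    have := (lintegral_eq_zero_iff hmeas).1 key.symm
    filter_upwards [this] with z hz using hz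
  rw [ae_restrict_iff' hs] at hae
  rw [ae_iff] at hae
  refine measure_mono_null ?_ hae
  rintro z ⟨hzs, hzA⟩
  simp only [Set.mem_setOf_eq]
  intro hcon
  have h1 := hcon hzs
  have h2 : (Psi ⁻¹' A).indicator (1 : ℂ → ℝ≥0∞) z = 1 := by
    simp [Set.indicator_apply, hzA]
  rw [h2, mul_one] at h1
  exact absurd h1 (by simpa using abs_pos.mpr (hsub z hzs))

lemma Zset_null : volume {z : ℂ | Real.sin (z.re - z.im) = 0} = 0 := by
  have hset : {z : ℂ | Real.sin (z.re - z.im) = 0} =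
      ⋃ n : ℤ, {z : ℂ | z.re - z.im = (n : ℝ) * Real.pi} := by
    ext z
    simp only [Set.mem_setOf_eq, Set.mem_iUnion, Real.sin_eq_zero_iff]
    constructor
    · rintro ⟨n, hn⟩; exact ⟨n, hn.symm⟩
    · rintro ⟨n, hn⟩; exact ⟨n, hn.symm⟩
  rw [hset]
  refine measure_iUnion_null fun n => ?_
  set c := (n : ℝ) * Real.pi
  have hline : {z : ℂ | z.re - z.im = c} =
      Complex.measurableEquivRealProd ⁻¹' {p : ℝ × ℝ | p.1 - p.2 = c} := by
    ext z; simp [Complex.measurableEquivRealProd]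
  rw [hline]
  have hT : MeasurableSet {p : ℝ × ℝ | p.1 - p.2 = c} :=
    measurableSet_eq_fun (by fun_prop) measurable_const
  rw [Complex.volume_preserving_equiv_real_prod.measure_preimage hT.nullMeasurableSet]
  rw [Measure.volume_eq_prod, Measure.measure_prod_null hT]
  refine Filter.Eventually.of_forall fun x => ?_
  have : Prod.mk x ⁻¹' {p : ℝ × ℝ | p.1 - p.2 = c} = {x - c} := by
    ext y; simp [Set.mem_preimage]; constructor <;> intro h <;> linarith
  simp only [Pi.zero_apply]
  rw [this]
  exact measure_singleton _

def Boxm : MeasurableSet Box :=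
  ((measurableSet_Ico.preimage Complex.measurable_re).inter
    (measurableSet_Ico.preimage Complex.measurable_im))

lemma map_Psi_ac {Et : Set ℂ} (hEt : Et ⊆ Box) (hEtm : MeasurableSet Et) :
    Measure.map Psi (volume.restrict Et) ≪ volume := by
  refine Measure.AbsolutelyContinuous.mk fun A hA hA0 => ?_
  rw [Measure.map_apply continuous_Psi.measurable hA,
    Measure.restrict_apply (continuous_Psi.measurable hA)]
  have hSposm : MeasurableSet ({z : ℂ | 0 < Real.sin (z.re - z.im)} ∩ Box) := by
    refine MeasurableSet.inter ?_ Boxm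
    exact measurableSet_lt measurable_const
      (Real.continuous_sin.comp (Complex.continuous_re.sub Complex.continuous_im)).measurable
  have hSnegm : MeasurableSet ({z : ℂ | Real.sin (z.re - z.im) < 0} ∩ Box) := by
    refine MeasurableSet.inter ?_ Boxm
    exact measurableSet_lt
      (Real.continuous_sin.comp (Complex.continuous_re.sub Complex.continuous_im)).measurable
      measurable_const
  have cover : Psi ⁻¹' A ∩ Et ⊆
      (({z : ℂ | 0 < Real.sin (z.re - z.im)} ∩ Box) ∩ Psi ⁻¹' A) ∪
      ((({z : ℂ | Real.sin (z.re - z.im) < 0} ∩ Box) ∩ Psi ⁻¹' A) ∪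
       {z : ℂ | Real.sin (z.re - z.im) = 0}) := by
    rintro z ⟨hzA, hzE⟩
    rcases lt_trichotomy (Real.sin (z.re - z.im)) 0 with h | h | h
    · exact Or.inr (Or.inl ⟨⟨h, hEt hzE⟩, hzA⟩)
    · exact Or.inr (Or.inr h)
    · exact Or.inl ⟨⟨h, hEt hzE⟩, hzA⟩
  refine measure_mono_null cover ?_
  refine measure_union_null ?_ (measure_union_null ?_ Zset_null)
  · exact null_preimage_Psi hA hA0 hSposm (fun z hz => ne_of_gt hz.1) injOn_Psi_pos
  · exact null_preimage_Psi hA hA0 hSnegm (fun z hz => ne_of_lt hz.1) injOn_Psi_neg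

/-- A closed subset of `S¹` of positive arc-length measure carries, for every `δ > 0`,
a probability measure whose Fourier transform is at most `δ` outside some ball. -/
theorem positive_measure_set_carries_almost_Rajchman (Θ : Set ℂ)
    (hΘS : Θ ⊆ Metric.sphere (0 : ℂ) 1) (hΘcl : IsClosed Θ)
    (hpos : 0 < arcLength Θ) :
    ∀ δ > 0, ∃ μ : Measure ℂ, IsProbabilityMeasure μ ∧ μ Θᶜ = 0 ∧
      ∃ R : ℝ, ∀ ξ : ℂ, R ≤ ‖ξ‖ → ‖ftMeasure μ ξ‖ ≤ δ := by
  intro δ hδ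
  set φm : ℝ → ℂ := fun t => Complex.exp (t * Complex.I) with hφm
  have hφmc : Continuous φm := by fun_prop
  set E : Set ℝ := Set.Ico 0 (2 * Real.pi) ∩ φm ⁻¹' Θ with hEdef
  have hEm : MeasurableSet E :=
    measurableSet_Ico.inter (hΘcl.measurableSet.preimage hφmc.measurable)
  have hcE : arcLength Θ = volume E := by
    rw [arcLength, Measure.map_apply hφmc.measurable hΘcl.measurableSet,
      Measure.restrict_apply (hΘcl.measurableSet.preimage hφmc.measurable)]
    exact congrArg volume (Set.inter_comm _ _)
  set c : ℝ≥0∞ := volume E with hc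
  have hc0 : c ≠ 0 := by rw [← hcE]; exact hpos.ne'
  have hctop : c ≠ ⊤ := by
    have h1 : c ≤ volume (Set.Ico (0:ℝ) (2*Real.pi)) :=
      measure_mono Set.inter_subset_left
    rw [Real.volume_Ico] at h1
    exact (h1.trans_lt ENNReal.ofReal_lt_top).ne
  have hcR : 0 < c.toReal := ENNReal.toReal_pos hc0 hctop
  set μ : Measure ℂ := c⁻¹ • Measure.map φm (volume.restrict E) with hμ
  have hprob : IsProbabilityMeasure μ := by
    constructor
    rw [hμ, Measure.smul_apply, Measure.map_apply hφmc.measurable MeasurableSet.univ,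
      Set.preimage_univ, Measure.restrict_apply_univ, smul_eq_mul,
      ENNReal.inv_mul_cancel hc0 hctop]
  have hΘcnull : μ Θᶜ = 0 := by
    rw [hμ, Measure.smul_apply, Measure.map_apply hφmc.measurable hΘcl.measurableSet.compl,
      Measure.restrict_apply (hΘcl.measurableSet.compl.preimage hφmc.measurable)]
    have hempty : φm ⁻¹' Θᶜ ∩ E = ∅ := by
      ext t
      simp only [Set.mem_inter_iff, Set.mem_preimage, Set.mem_compl_iff, hEdef,
        Set.mem_empty_iff_false, iff_false]
      tauto
    rw [hempty]
    simp
  refine ⟨μ, hprob, hΘcnull, ?_⟩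
  set eC : ℂ → ℂ → ℂ :=
    fun ξ x => Complex.exp (-(2 * Real.pi * (ξ.re * x.re + ξ.im * x.im)) * Complex.I) with heC
  have heCcont : ∀ ξ, Continuous (eC ξ) := by
    intro ξ
    apply Complex.continuous_exp.comp
    fun_prop
  set F : ℂ → ℂ := fun ξ => ∫ t in E, eC ξ (φm t) with hF
  have hft : ∀ ξ, ftMeasure μ ξ = c.toReal⁻¹ • F ξ := by
    intro ξ
    rw [show ftMeasure μ ξ = ∫ x, eC ξ x ∂μ from rfl, hμ, integral_smul_measure,
      integral_map hφmc.aemeasurable (heCcont ξ).aestronglyMeasurable, ENNReal.toReal_inv]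
  set Etil : Set ℂ := Complex.measurableEquivRealProd ⁻¹' (E ×ˢ E) with hEtil
  have hEtilm : MeasurableSet Etil :=
    Complex.measurableEquivRealProd.measurable (hEm.prod hEm)
  have hEtilBox : Etil ⊆ Box := by
    rintro z hz
    simp only [hEtil, Set.mem_preimage, Complex.measurableEquivRealProd_apply,
      Set.mem_prod] at hz
    exact ⟨(hEdef ▸ hz.1).1, (hEdef ▸ hz.2).1⟩
  set ν : Measure ℂ := Measure.map Psi (volume.restrict Etil) with hν
  have hνfin : IsFiniteMeasure ν := by
    constructor
    rw [hν, Measure.map_apply continuous_Psi.measurable MeasurableSet.univ,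
      Set.preimage_univ, Measure.restrict_apply_univ]
    calc volume Etil = volume (E ×ˢ E) :=
          Complex.volume_preserving_equiv_real_prod.measure_preimage
            (hEm.prod hEm).nullMeasurableSet
      _ = c * c := by rw [Measure.volume_eq_prod, Measure.prod_prod]
      _ < ⊤ := ENNReal.mul_lt_top hctop.lt_top hctop.lt_top
  have hac : ν ≪ volume := map_Psi_ac hEtilBox hEtilm
  -- key identity : F ξ * conj (F ξ) = ∫ x, eC ξ x ∂ν
  have hkey : ∀ ξ : ℂ, F ξ * (starRingEnd ℂ) (F ξ) = ∫ x, eC ξ x ∂ν := by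
    intro ξ
    have hpoint : ∀ z : ℂ, eC ξ (φm z.re) * (starRingEnd ℂ) (eC ξ (φm z.im)) = eC ξ (Psi z) := by
      intro z
      rw [heC]
      simp only
      rw [← Complex.exp_conj, ← Complex.exp_add]
      congr 1
      simp only [Psi, hφm, Complex.sub_re, Complex.sub_im, map_neg, map_mul, map_add,
        Complex.conj_ofReal, Complex.conj_I, map_ofNat]
      push_cast
      ring
    calc F ξ * (starRingEnd ℂ) (F ξ)
        = (∫ t in E, eC ξ (φm t)) * ∫ s in E, (starRingEnd ℂ) (eC ξ (φm s)) := by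
          rw [hF]; simp only; rw [← integral_conj]
      _ = ∫ p in E ×ˢ E, eC ξ (φm p.1) * (starRingEnd ℂ) (eC ξ (φm p.2))
            ∂(volume : Measure (ℝ × ℝ)) := by
          rw [Measure.volume_eq_prod, ← Measure.prod_restrict, ← integral_prod_mul]
      _ = ∫ z in Etil, eC ξ (φm (Complex.measurableEquivRealProd z).1) *
            (starRingEnd ℂ) (eC ξ (φm (Complex.measurableEquivRealProd z).2)) := by
          rw [hEtil]
          exact (Complex.volume_preserving_equiv_real_prod.setIntegral_preimage_emb
            Complex.measurableEquivRealProd.measurableEmbedding _ _).symm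
      _ = ∫ z in Etil, eC ξ (Psi z) := by
          refine setIntegral_congr_fun hEtilm fun z _ => ?_
          simp only [Complex.measurableEquivRealProd_apply]
          exact hpoint z
      _ = ∫ x, eC ξ x ∂ν := by
          rw [hν, integral_map continuous_Psi.aemeasurable (heCcont ξ).aestronglyMeasurable]
  -- Riemann-Lebesgue
  have hRL := tendsto_integral_exp_inner_smul_cocompact
    (f := fun x : ℂ => ((ν.rnDeriv volume x).toReal : ℂ))
  have hGeq : ∀ w : ℂ, (∫ v : ℂ, (Real.fourierChar (-(inner ℝ v w : ℝ)) : Circle) •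
      ((ν.rnDeriv volume v).toReal : ℂ)) = ∫ x, eC w x ∂ν := by
    intro w
    rw [← MeasureTheory.integral_rnDeriv_smul hac (f := eC w)]
    refine integral_congr_ae (Filter.Eventually.of_forall fun v => ?_)
    have hinner : (inner ℝ v w : ℝ) = v.re * w.re + v.im * w.im := by
      rw [Complex.inner]
      simp [Complex.mul_re]
      ring
    simp only [Circle.smul_def, Real.fourierChar_apply, Complex.real_smul, smul_eq_mul]
    rw [mul_comm (Complex.exp _)]
    congr 1
    rw [heC]
    simp only
    congr 1
    rw [hinner]
    push_cast
    ring
  have hRL' : Tendsto (fun w : ℂ => ∫ x, eC w x ∂ν) (cocompact ℂ) (nhds 0) := by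
    refine hRL.congr fun w => ?_
    exact hGeq w
  -- extract R
  have hev : ∀ᶠ w : ℂ in cocompact ℂ, ‖∫ x, eC w x ∂ν‖ < (δ * c.toReal) ^ 2 := by
    have hpos2 : (0:ℝ) < (δ * c.toReal) ^ 2 := by positivity
    have := Metric.tendsto_nhds.mp hRL' _ hpos2
    refine this.mono fun w hw => ?_
    rwa [dist_zero_right] at hw
  obtain ⟨K, hK, hKsub⟩ := Filter.hasBasis_cocompact.eventually_iff.mp hev
  obtain ⟨R₀, hR₀⟩ := hK.isBounded.subset_closedBall 0
  refine ⟨R₀ + 1, fun ξ hξ => ?_⟩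
  have hnotK : ξ ∉ K := by
    intro hmem
    have := hR₀ hmem
    rw [Metric.mem_closedBall, dist_zero_right] at this
    linarith
  have hGsmall : ‖∫ x, eC ξ x ∂ν‖ < (δ * c.toReal) ^ 2 := hKsub hnotK
  have hFsq : ‖F ξ‖ ^ 2 = ‖∫ x, eC ξ x ∂ν‖ := by
    rw [← hkey ξ, norm_mul, RCLike.norm_conj]
    ring
  have hFle : ‖F ξ‖ ≤ δ * c.toReal := by
    nlinarith [norm_nonneg (F ξ), hFsq, hGsmall, mul_pos hδ hcR]
  rw [hft ξ, norm_smul, Real.norm_eq_abs, _root_.abs_of_nonneg (inv_nonneg.mpr hcR.le)]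
  calc c.toReal⁻¹ * ‖F ξ‖ ≤ c.toReal⁻¹ * (δ * c.toReal) := by
        exact mul_le_mul_of_nonneg_left hFle (inv_nonneg.mpr hcR.le)
    _ = δ := by field_simp
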